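/- Let (X, 𝒜, κ) be a measure space and ψ : X → (0, ∞) a measurable function with M := sup_{t>0} t · κ({x ∈ X : ψ(x) > t}) < ∞. Let g : X → ℂ be measurable and suppose there is K ≥ 0 with |g(x)| ≤ K for all x ∈ X. Then for every y > 0 one has ∫_{{x ∈ X : |g(x)| > y ψ(x)}} ψ(x)² dκ(x) ≤ 2 M K / y. -/
import Mathlib

open MeasureTheory Set
open scoped ENNReal

/-- Weak-type (1,1) estimate: if `ψ : X → (0,∞)` has
`M := sup_{t>0} t · κ({ψ > t}) < ∞` and `g` is measurable with `|g| ≤ K`, then for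
every `y > 0`, `∫_{{|g| > y ψ}} ψ² dκ ≤ 2 M K / y`. -/
theorem stmt13 {X : Type*} [MeasurableSpace X] (κ : Measure X)
    (ψ : X → ℝ) (hψmeas : Measurable ψ) (hψpos : ∀ x, 0 < ψ x)
    (M : ℝ≥0∞)
    (hM : M = ⨆ (t : ℝ) (_ : 0 < t), ENNReal.ofReal t * κ {x | t < ψ x})
    (hMfin : M ≠ ⊤)
    (g : X → ℂ) (hgmeas : Measurable g)
    (K : ℝ) (hK : 0 ≤ K) (hgbd : ∀ x, ‖g x‖ ≤ K)
    (y : ℝ) (hy : 0 < y) :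
    ∫⁻ x in {x | y * ψ x < ‖g x‖}, ENNReal.ofReal (ψ x ^ 2) ∂κ ≤
      2 * M * ENNReal.ofReal K / ENNReal.ofReal y := by
  set S : Set X := {x | y * ψ x < ‖g x‖} with hS
  have hSmeas : MeasurableSet S :=
    measurableSet_lt (by fun_prop) hgmeas.norm
  set μ := κ.restrict S with hμ
  -- rewrite ψ^2 as rpow
  have hpow : ∀ x, (ψ x : ℝ) ^ 2 = ψ x ^ (2 : ℝ) := by
    intro x
    rw [← Real.rpow_natCast (ψ x) 2]
    norm_num
  have key := MeasureTheory.lintegral_rpow_eq_lintegral_meas_lt_mul μ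
    (Filter.Eventually.of_forall fun x => (hψpos x).le) hψmeas.aemeasurable
    (p := 2) (by norm_num)
  simp_rw [hpow]
  rw [key]
  -- bound the inner integral
  have hbound : ∫⁻ t in Ioi 0, μ {a | t < ψ a} * ENNReal.ofReal (t ^ ((2:ℝ) - 1))
      ≤ ∫⁻ t in Ioi 0, (Ioo (0:ℝ) (K / y)).indicator (fun _ => M) t := by
    apply lintegral_mono_ae
    filter_upwards [self_mem_ae_restrict (measurableSet_Ioi : MeasurableSet (Ioi (0:ℝ)))]
    intro t ht
    simp only [mem_Ioi] at ht
    by_cases htK : t < K / y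
    · have h1 : μ {a | t < ψ a} ≤ κ {a | t < ψ a} :=
        Measure.restrict_le_self _
      have h2 : ENNReal.ofReal t * κ {a | t < ψ a} ≤ M := by
        rw [hM]
        exact le_iSup₂ (f := fun (t : ℝ) (_ : 0 < t) => ENNReal.ofReal t * κ {x | t < ψ x}) t ht
      have : μ {a | t < ψ a} * ENNReal.ofReal (t ^ ((2:ℝ) - 1)) ≤ M := by
        calc μ {a | t < ψ a} * ENNReal.ofReal (t ^ ((2:ℝ) - 1))
            = ENNReal.ofReal t * μ {a | t < ψ a} := by
              rw [mul_comm]; congr 1; norm_num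
          _ ≤ ENNReal.ofReal t * κ {a | t < ψ a} := by gcongr
          _ ≤ M := h2
      simpa [indicator_of_mem (mem_Ioo.mpr ⟨ht, htK⟩)] using this
    · push_neg at htK
      have hempty : μ {a | t < ψ a} = 0 := by
        rw [hμ, Measure.restrict_apply' hSmeas]
        convert measure_empty (μ := κ)
        ext x
        simp only [mem_inter_iff, mem_setOf_eq, mem_empty_iff_false, iff_false, hS]
        rintro ⟨h1, h2⟩
        have : ψ x < K / y := by
          rw [lt_div_iff₀ hy]
          calc ψ x * y = y * ψ x := mul_comm _ _
            _ < ‖g x‖ := h2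
            _ ≤ K := hgbd x
        exact absurd (this.trans_le htK) (lt_asymm h1)
      simp [hempty, indicator_apply]
  have hvol : ∫⁻ t in Ioi 0, (Ioo (0:ℝ) (K / y)).indicator (fun _ => M) t
      = M * ENNReal.ofReal (K / y) := by
    rw [lintegral_indicator measurableSet_Ioo, setLIntegral_const,
      Measure.restrict_apply measurableSet_Ioo]
    rw [inter_eq_left.mpr (Ioo_subset_Ioi_self), Real.volume_Ioo, sub_zero]
  calc ENNReal.ofReal 2 * ∫⁻ t in Ioi 0, μ {a | t < ψ a} * ENNReal.ofReal (t ^ ((2:ℝ) - 1))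
      ≤ ENNReal.ofReal 2 * (M * ENNReal.ofReal (K / y)) := by
        rw [← hvol]; gcongr
    _ = 2 * M * ENNReal.ofReal K / ENNReal.ofReal y := by
        rw [ENNReal.ofReal_div_of_pos hy, ENNReal.ofReal_ofNat, mul_div_assoc, mul_assoc]
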